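/- Let M be an N×N nonnegative irreducible matrix, let v be an entrywise positive vector, and let λ be a real number with M v = λ v. Then λ equals the spectral radius of M. -/

import Mathlib

open Matrix Polynomial

/-- A matrix is irreducible if the directed graph on its indices, with an edge `i → j`
whenever `M i j ≠ 0`, is strongly connected. -/
def MatIrreducible {N : ℕ} (M : Matrix (Fin N) (Fin N) ℝ) : Prop :=
  ∀ i j : Fin N, Relation.TransGen (fun a b => M a b ≠ 0) i j

/-- The spectral radius of a real matrix: the maximum modulus of its complex eigenvalues
(the roots of the characteristic polynomial of its complexification). -/
noncomputable def specRad {N : ℕ} (M : Matrix (Fin N) (Fin N) ℝ) : ℝ :=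
  sSup {r : ℝ | ∃ μ : ℂ, ((M.map (Complex.ofReal)).charpoly).IsRoot μ ∧ r = ‖μ‖}

/-!
Let `w` be a complex eigenvector for `μ` and let `i` maximise `‖w i‖ / v i =: c`, so that
`‖w‖ ≤ c • v` with equality at `i`. The triangle inequality and `0 ≤ M` give
`‖μ‖ ‖w i‖ ≤ (M *ᵥ ‖w‖) i ≤ c (M *ᵥ v) i = λ ‖w i‖`, hence `‖μ‖ ≤ λ`. Since `λ` is itself an
eigenvalue, this also forces `0 ≤ λ`, so `λ` is the largest modulus of an eigenvalue.
-/

namespace Matrix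

theorem isRoot_charpoly_iff_exists_mulVec_eq_smul {n K : Type*} [Fintype n] [DecidableEq n]
    [Field K] (A : Matrix n n K) (μ : K) :
    A.charpoly.IsRoot μ ↔ ∃ w ≠ 0, A *ᵥ w = μ • w := by
  have hscalar (w : n → K) : scalar n μ *ᵥ w = μ • w := by
    ext i
    simp [mulVec_diagonal]
  simp only [IsRoot.def, eval_charpoly, ← exists_mulVec_eq_zero_iff, sub_mulVec, hscalar,
    sub_eq_zero, eq_comm (a := μ • _)]

theorem le_of_smul_le_mulVec_of_mulVec_eq_smul {n : Type*} [Fintype n]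
    {M : Matrix n n ℝ} (hM : ∀ i j, 0 ≤ M i j) {v : n → ℝ} (hv : ∀ i, 0 < v i) {lam : ℝ}
    (hMv : M *ᵥ v = lam • v) {u : n → ℝ} (hu₀ : 0 ≤ u) (hu : u ≠ 0) {r : ℝ}
    (hru : r • u ≤ M *ᵥ u) : r ≤ lam := by
  obtain ⟨j, hj⟩ := Function.ne_iff.mp hu
  obtain ⟨i, -, hi⟩ :=
    Finset.exists_max_image Finset.univ (fun i => u i / v i) ⟨j, Finset.mem_univ j⟩
  have hu_le : u ≤ (u i / v i) • v := fun k => by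
    simpa [div_le_iff₀ (hv k), mul_comm] using hi k (Finset.mem_univ k)
  have hui : 0 < u i := by
    have := lt_of_lt_of_le (div_pos ((hu₀ j).lt_of_ne' hj) (hv j)) (hi j (Finset.mem_univ j))
    exact (div_pos_iff_of_pos_right (hv i)).mp this
  refine le_of_mul_le_mul_right ?_ hui
  calc r * u i ≤ (M *ᵥ u) i := hru i
    _ ≤ (M *ᵥ ((u i / v i) • v)) i := by
        simp only [mulVec, dotProduct]
        exact Finset.sum_le_sum fun k _ => mul_le_mul_of_nonneg_left (hu_le k) (hM i k)
    _ = lam * u i := by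
        simp only [mulVec_smul, hMv, Pi.smul_apply, smul_eq_mul]
        field_simp [(hv i).ne']

theorem norm_smul_norm_le_mulVec_norm {n : Type*} [Fintype n]
    {M : Matrix n n ℝ} (hM : ∀ i j, 0 ≤ M i j) {w : n → ℂ} {μ : ℂ}
    (hw : M.map Complex.ofReal *ᵥ w = μ • w) :
    ‖μ‖ • (fun i => ‖w i‖) ≤ M *ᵥ fun i => ‖w i‖ := fun i => by
  calc ‖μ‖ * ‖w i‖ = ‖(M.map Complex.ofReal *ᵥ w) i‖ := by simp [hw]
    _ ≤ ∑ j, ‖(M i j : ℂ) * w j‖ := norm_sum_le _ _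
    _ = (M *ᵥ fun i => ‖w i‖) i := by
        simp [mulVec, dotProduct, Complex.norm_real, abs_of_nonneg (hM i _)]

theorem norm_le_of_isRoot_charpoly_map_ofReal {n : Type*} [Fintype n] [DecidableEq n]
    {M : Matrix n n ℝ} (hM : ∀ i j, 0 ≤ M i j) {v : n → ℝ} (hv : ∀ i, 0 < v i) {lam : ℝ}
    (hMv : M *ᵥ v = lam • v) {μ : ℂ} (hμ : (M.map Complex.ofReal).charpoly.IsRoot μ) :
    ‖μ‖ ≤ lam := by
  obtain ⟨w, hw, hMw⟩ := (isRoot_charpoly_iff_exists_mulVec_eq_smul _ μ).1 hμ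
  refine le_of_smul_le_mulVec_of_mulVec_eq_smul hM hv hMv (fun i => norm_nonneg (w i)) ?_
    (norm_smul_norm_le_mulVec_norm hM hMw)
  obtain ⟨i, hi⟩ := Function.ne_iff.mp hw
  exact Function.ne_iff.mpr ⟨i, norm_ne_zero_iff.mpr hi⟩

end Matrix

theorem eigenvalue_of_positive_eigenvector_eq_spectral_radius_general
    (N : ℕ) (hN : 0 < N) (M : Matrix (Fin N) (Fin N) ℝ)
    (hM0 : ∀ i j, 0 ≤ M i j)
    (v : Fin N → ℝ) (hv : ∀ i, 0 < v i)
    (lam : ℝ) (hMv : M.mulVec v = lam • v) :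
    specRad M = lam := by
  have hv_ne : v ≠ 0 := fun h => (hv ⟨0, hN⟩).ne' (congrFun h _)
  have hroot : (M.map Complex.ofReal).charpoly.IsRoot (lam : ℂ) := by
    have h := ((isRoot_charpoly_iff_exists_mulVec_eq_smul M lam).2 ⟨v, hv_ne, hMv⟩).map
      (f := Complex.ofRealHom)
    rwa [← charpoly_map] at h
  have hbound (μ : ℂ) (hμ : (M.map Complex.ofReal).charpoly.IsRoot μ) : ‖μ‖ ≤ lam :=
    norm_le_of_isRoot_charpoly_map_ofReal hM0 hv hMv hμ
  have hlam : |lam| = lam :=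
    abs_eq_self.mpr <| (abs_nonneg lam).trans (by simpa using hbound _ hroot)
  refine IsGreatest.csSup_eq ⟨⟨lam, hroot, by simp [hlam]⟩, ?_⟩
  rintro r ⟨μ, hμ, rfl⟩
  exact hbound μ hμ

/-- If `M` is an `N×N` nonnegative irreducible matrix, `v` is an entrywise
positive vector and `λ` is a real number with `M v = λ v`, then `λ` is the spectral
radius of `M`. -/
theorem eigenvalue_of_positive_eigenvector_eq_spectral_radius
    (N : ℕ) (hN : 0 < N) (M : Matrix (Fin N) (Fin N) ℝ)
    (hM0 : ∀ i j, 0 ≤ M i j) (hMirr : MatIrreducible M)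
    (v : Fin N → ℝ) (hv : ∀ i, 0 < v i)
    (lam : ℝ) (hMv : M.mulVec v = lam • v) :
    specRad M = lam :=
  eigenvalue_of_positive_eigenvector_eq_spectral_radius_general N hN M hM0 v hv lam hMv
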